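/- Let G = (V,E) carry a pairwise MRF with energy H, and suppose the per-partition algorithm is an α-approximation: for each k, H_k(x̂_k) ≥ (1/α)·max H_k. Then the combined assignment x̂ satisfies H(x̂) ≥ (1/α)·(H(x̄*) - ∑_{(i,j)∈B} (ψ^U_{ij} - ψ^L_{ij})), where B is the set of edges crossing partitions. -/

import Mathlib

/-!
Split `H` into the partition energies `H_k`, which only see edges inside a part, plus the
energy of the crossing edges `B`. Moving from `x̄*` to `x̂` changes each crossing term by at most
`ψ^U - ψ^L`, while the partition energies grow by at most the factor `α`; the crossing energy of
`x̂` is nonnegative, so it too may be multiplied by `α ≥ 1`.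
-/

open Finset

section PartitionDecomposition

variable {V ι M : Type*} [DecidableEq ι] [AddCommMonoid M]
  (E : Finset (V × V)) (part : V → ι) {K : Finset ι}

theorem sum_sum_filter_internal_edges (hK : ∀ i, part i ∈ K) (w : V × V → M) :
    ∑ k ∈ K, ∑ p ∈ E with part p.1 = k ∧ part p.2 = k, w p =
      ∑ p ∈ E with part p.1 = part p.2, w p := by
  rw [← sum_fiberwise_of_maps_to (s := {p ∈ E | part p.1 = part p.2}) (g := fun p => part p.1)
    (fun p _ => hK p.1)]
  refine sum_congr rfl fun k _ => ?_
  rw [filter_filter]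
  refine sum_congr (filter_congr fun p _ => ?_) fun _ _ => rfl
  constructor
  · rintro ⟨h1, h2⟩; exact ⟨h1 ▸ h2.symm, h1⟩
  · rintro ⟨h, h1⟩; exact ⟨h1, h ▸ h1⟩

theorem sum_partition_add_sum_cross_edges [Fintype V] (hK : ∀ i, part i ∈ K)
    (f : V → M) (w : V × V → M) :
    ∑ k ∈ K, ((∑ i with part i = k, f i) + ∑ p ∈ E with part p.1 = k ∧ part p.2 = k, w p)
      + ∑ p ∈ E with part p.1 ≠ part p.2, w p = ∑ i, f i + ∑ p ∈ E, w p := by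
  rw [sum_add_distrib, sum_fiberwise_of_maps_to (fun i _ => hK i),
    sum_sum_filter_internal_edges E part hK, add_assoc, sum_filter_add_sum_filter_not]

end PartitionDecomposition

theorem sub_le_sup'_sub_inf' {β γ : Type*} [AddCommGroup γ] [LinearOrder γ]
    [IsOrderedAddMonoid γ] {s : Finset β} (hs : s.Nonempty) (f : β → γ) {a b : β} (ha : a ∈ s)
    (hb : b ∈ s) : f a - f b ≤ s.sup' hs f - s.inf' hs f :=
  sub_le_sub (le_sup' f ha) (inf'_le f hb)

theorem stmt_11_general {V S ι : Type*} [Fintype V] [Fintype S] [Nonempty S]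
    [DecidableEq ι]
    (E : Finset (V × V))
    (lnφ : V → S → ℝ) (lnψ : V → V → S → S → ℝ)
    (hψ : ∀ i j σ σ', 0 ≤ lnψ i j σ σ')
    (part : V → ι)
    (H : (V → S) → ℝ)
    (hH : ∀ x, H x = ∑ i, lnφ i (x i) + ∑ p ∈ E, lnψ p.1 p.2 (x p.1) (x p.2))
    (Hk : ι → (V → S) → ℝ)
    (hHk : ∀ k x, Hk k x =
      (∑ i ∈ Finset.univ.filter (fun i => part i = k), lnφ i (x i)) +
      ∑ p ∈ E.filter (fun p => part p.1 = k ∧ part p.2 = k),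
        lnψ p.1 p.2 (x p.1) (x p.2))
    (α : ℝ) (hα : 1 ≤ α)
    (xhat : V → S) (hopt : ∀ k x, Hk k x ≤ α * Hk k xhat)
    (xstar : V → S) :
    (1 / α) * (H xstar -
      ∑ p ∈ E.filter (fun p => part p.1 ≠ part p.2),
        ((Finset.univ.sup' Finset.univ_nonempty fun σ : S × S => lnψ p.1 p.2 σ.1 σ.2)
          - (Finset.univ.inf' Finset.univ_nonempty fun σ : S × S => lnψ p.1 p.2 σ.1 σ.2)))
      ≤ H xhat := by
  set B := E.filter (fun p => part p.1 ≠ part p.2)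
  let cross (x : V → S) := ∑ p ∈ B, lnψ p.1 p.2 (x p.1) (x p.2)
  have hdecomp (x : V → S) : H x = ∑ k ∈ univ.image part, Hk k x + cross x := by
    simp only [hH, hHk]
    exact (sum_partition_add_sum_cross_edges E part (fun i => mem_image_of_mem part (mem_univ i))
      (fun i => lnφ i (x i)) fun p => lnψ p.1 p.2 (x p.1) (x p.2)).symm
  have hcross : cross xstar - cross xhat ≤ ∑ p ∈ B,
      ((univ.sup' univ_nonempty fun σ : S × S => lnψ p.1 p.2 σ.1 σ.2)
        - (univ.inf' univ_nonempty fun σ : S × S => lnψ p.1 p.2 σ.1 σ.2)) := by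
    rw [← sum_sub_distrib]
    exact sum_le_sum fun p _ => sub_le_sup'_sub_inf' univ_nonempty
      (fun σ : S × S => lnψ p.1 p.2 σ.1 σ.2) (mem_univ (xstar p.1, xstar p.2))
      (mem_univ (xhat p.1, xhat p.2))
  have hpart : ∑ k ∈ univ.image part, Hk k xstar ≤ α * ∑ k ∈ univ.image part, Hk k xhat := by
    rw [mul_sum]
    exact sum_le_sum fun k _ => hopt k xstar
  have hcross_le : cross xhat ≤ α * cross xhat :=
    le_mul_of_one_le_left (sum_nonneg fun p _ => hψ _ _ _ _) hα
  rw [one_div, inv_mul_le_iff₀ (zero_lt_one.trans_le hα), hdecomp xstar, hdecomp xhat]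
  linarith

theorem stmt_11 {V S ι : Type*} [Fintype V] [DecidableEq V] [Fintype S] [Nonempty S]
    [Fintype ι] [DecidableEq ι]
    (E : Finset (V × V))
    (hirr : ∀ p ∈ E, p.1 ≠ p.2)
    (honce : ∀ p ∈ E, (p.2, p.1) ∉ E)
    (lnφ : V → S → ℝ) (lnψ : V → V → S → S → ℝ)
    (hφ : ∀ i σ, 0 ≤ lnφ i σ) (hψ : ∀ i j σ σ', 0 ≤ lnψ i j σ σ')
    (part : V → ι)
    (H : (V → S) → ℝ)
    (hH : ∀ x, H x = ∑ i, lnφ i (x i) + ∑ p ∈ E, lnψ p.1 p.2 (x p.1) (x p.2))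
    (Hk : ι → (V → S) → ℝ)
    (hHk : ∀ k x, Hk k x =
      (∑ i ∈ Finset.univ.filter (fun i => part i = k), lnφ i (x i)) +
      ∑ p ∈ E.filter (fun p => part p.1 = k ∧ part p.2 = k),
        lnψ p.1 p.2 (x p.1) (x p.2))
    (α : ℝ) (hα : 1 ≤ α)
    (xhat : V → S) (hopt : ∀ k x, Hk k x ≤ α * Hk k xhat)
    (xstar : V → S) (hmax : ∀ x, H x ≤ H xstar) :
    (1 / α) * (H xstar -
      ∑ p ∈ E.filter (fun p => part p.1 ≠ part p.2),
        ((Finset.univ.sup' Finset.univ_nonempty fun σ : S × S => lnψ p.1 p.2 σ.1 σ.2)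
          - (Finset.univ.inf' Finset.univ_nonempty fun σ : S × S => lnψ p.1 p.2 σ.1 σ.2)))
      ≤ H xhat :=
  stmt_11_general E lnφ lnψ hψ part H hH Hk hHk α hα xhat hopt xstar
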